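/- Suppose a region of area π on the unit sphere has perimeter less than 6.62, and its largest component has area t with 0 ≤ t ≤ π, so that the perimeter is at least √(t(4π−t)) + √((π−t)(4π−π+t)). Then t > 23π/25 or t < 2π/25. -/

import Mathlib

/-!
With `u = t(π - t)` the two radicands have sum `3π² + 2u` and product `u(u + 12π²)`, so the
lower bound `√x + √y = √(x + y + 2√(xy))` increases with `u`. On `[2π/25, 23π/25]` we have
`u ≥ 46π²/625`, which already pushes the bound above `6.62`.
-/

open Real

theorem sqrt_le_sqrt_add_sqrt {x y s p : ℝ} (hx : 0 ≤ x) (hy : 0 ≤ y)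
    (hs : s ≤ x + y) (hp : p ≤ x * y) : √(s + 2 * √p) ≤ √x + √y := by
  have hsq : x + y + 2 * √(x * y) = (√x + √y) ^ 2 := by
    rw [add_sq, sq_sqrt hx, sq_sqrt hy, sqrt_mul hx]
    ring
  calc √(s + 2 * √p) ≤ √(x + y + 2 * √(x * y)) := by gcongr
    _ = √x + √y := by rw [hsq, sqrt_sq (by positivity)]

theorem lt_sqrt_add_sqrt_of_mem_Icc {t : ℝ} (ht : t ∈ Set.Icc (2 * π / 25) (23 * π / 25)) :
    6.62 < √(t * (4 * π - t)) + √((π - t) * (4 * π - π + t)) := by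
  obtain ⟨h_lower, h_upper⟩ := ht
  have hπ : 3 < π := pi_gt_three
  have hu : 46 * π ^ 2 / 625 ≤ t * (π - t) := by
    nlinarith [mul_nonneg (sub_nonneg.2 h_lower) (sub_nonneg.2 h_upper)]
  have hsum : 3 * π ^ 2 + 2 * (46 * π ^ 2 / 625)
      ≤ t * (4 * π - t) + (π - t) * (4 * π - π + t) := by
    nlinarith
  -- `0.94² < (46/625)(46/625 + 12) ≈ 0.8886`, the value of `u(u + 12π²)/π⁴` at `u = 46π²/625`.
  have hprod : (0.94 * π ^ 2) ^ 2 ≤ t * (4 * π - t) * ((π - t) * (4 * π - π + t)) := by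
    have hexpand : t * (4 * π - t) * ((π - t) * (4 * π - π + t))
        = t * (π - t) * (t * (π - t) + 12 * π ^ 2) := by ring
    rw [hexpand]
    nlinarith [mul_le_mul hu hu (by positivity) (hu.trans' (by positivity))]
  refine lt_of_lt_of_le ?_ (sqrt_le_sqrt_add_sqrt (by nlinarith) (by nlinarith) hsum hprod)
  rw [sqrt_sq (by positivity), lt_sqrt (by norm_num)]
  nlinarith

theorem largest_component_dichotomy_general (t P : ℝ)
    (hP : P < 6.62)
    (hiso : Real.sqrt (t * (4 * π - t)) + Real.sqrt ((π - t) * (4 * π - π + t)) ≤ P) :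
    t > 23 * π / 25 ∨ t < 2 * π / 25 := by
  by_contra! h
  have hbound := lt_sqrt_add_sqrt_of_mem_Icc ⟨h.2, h.1⟩
  linarith

/-- If a region of area π on the unit sphere has perimeter `P < 6.62`, its largest
component has area `t ∈ [0, π]`, and `P ≥ √(t(4π-t)) + √((π-t)(4π-π+t))`, then
`t > 23π/25` or `t < 2π/25`. -/
theorem largest_component_dichotomy (t P : ℝ)
    (ht : 0 ≤ t) (ht' : t ≤ π) (hP : P < 6.62)
    (hiso : Real.sqrt (t * (4 * π - t)) + Real.sqrt ((π - t) * (4 * π - π + t)) ≤ P) :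
    t > 23 * π / 25 ∨ t < 2 * π / 25 :=
  largest_component_dichotomy_general t P hP hiso
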